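/- arXiv:2202.11031 — 2 statements merged into one kernel-verified Lean document; each statement's English description precedes it below -/
import Mathlib

section
/- Let F, G₁, …, G_K be continuous cumulative distribution functions on ℝ. Suppose that for every k ∈ {1,…,K}: (i) for every θ_k ∈ Θ_k the map x ↦ g_k(x,θ_k) is continuous and increasing; (ii) Lebesgue measure μ is absolutely continuous with respect to ν; (iii) Θ_k is compact; and (iv) for every bounded continuous f : ℝ → ℝ, the map θ_k ↦ f(g_k(·,θ_k)) is continuous from Θ_k into L²(ν). Then there exists (θ₁,…,θ_K) ∈ Θ₁ × ⋯ × Θ_K with F(x) = G_k(g_k(x,θ_k)) for all x ∈ ℝ and all k ∈ {1,…,K} if and only if inf_{(θ₁,…,θ_K)∈Θ₁×⋯×Θ_K} ∫_ℝ ∑_{k=1}^K (F(x) − G_k(g_k(x,θ_k)))² dν(x) = 0. -/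
/-!
All functions involved take values in `[0,1]`, so the L²-continuity of `θₖ ↦ Gₖ(gₖ(·, θₖ))`
makes the objective `θ ↦ ∫ ∑ₖ (F - Gₖ ∘ gₖ(·, θₖ))² dν` continuous on the compact set
`Θ₁ × ⋯ × Θ_K`; hence its infimum is attained, and it is `0` exactly when some `θ` has
objective `0`. The integrand is continuous and nonnegative, so it vanishes `ν`-a.e., hence
Lebesgue-a.e. because `μ ≪ ν`, hence everywhere.
-/

open MeasureTheory Filter Topology

lemma mem_Icc_of_tendsto_atBot_atTop {F : ℝ → ℝ} (hF : Monotone F)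
    (hbot : Tendsto F atBot (𝓝 0)) (htop : Tendsto F atTop (𝓝 1)) (x : ℝ) :
    F x ∈ Set.Icc 0 1 :=
  ⟨le_of_tendsto hbot ((eventually_le_atBot x).mono fun _ hy => hF hy),
    ge_of_tendsto htop ((eventually_ge_atTop x).mono fun _ hy => hF hy)⟩

lemma integrable_sq_sub_of_mem_Icc {α : Type*} [MeasurableSpace α] {ν : Measure α}
    [IsFiniteMeasure ν] {f h : α → ℝ} (hf : AEStronglyMeasurable f ν)
    (hh : AEStronglyMeasurable h ν) (hf01 : ∀ x, f x ∈ Set.Icc 0 1)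
    (hh01 : ∀ x, h x ∈ Set.Icc 0 1) :
    Integrable (fun x => (f x - h x) ^ 2) ν := by
  refine .of_bound ((hf.sub hh).pow 2) 1 (ae_of_all _ fun x => ?_)
  obtain ⟨hf0, hf1⟩ := hf01 x
  obtain ⟨hh0, hh1⟩ := hh01 x
  rw [Real.norm_of_nonneg (sq_nonneg _)]
  nlinarith

/-- Integrated, this bounds an L¹ distance by an L² distance without Cauchy–Schwarz. -/
lemma abs_sq_sub_sub_sq_sub_le {a b c δ : ℝ} (ha : a ∈ Set.Icc (0 : ℝ) 1)
    (hb : b ∈ Set.Icc (0 : ℝ) 1) (hc : c ∈ Set.Icc (0 : ℝ) 1) (hδ : 0 < δ) :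
    |(c - a) ^ 2 - (c - b) ^ 2| ≤ δ + (a - b) ^ 2 / δ := by
  have hfactor : |(c - a) ^ 2 - (c - b) ^ 2| ≤ 2 * |a - b| := by
    rw [show (c - a) ^ 2 - (c - b) ^ 2 = (a - b) * (a + b - 2 * c) by ring, abs_mul, mul_comm]
    gcongr
    rw [abs_le]
    constructor <;> linarith [ha.1, ha.2, hb.1, hb.2, hc.1, hc.2]
  have hamgm : 2 * |a - b| ≤ δ + (a - b) ^ 2 / δ := by
    have hsq : δ + (a - b) ^ 2 / δ - 2 * |a - b| = (|a - b| - δ) ^ 2 / δ := by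
      field_simp
      rw [sub_sq |a - b| δ, sq_abs]
      ring
    rw [← sub_nonneg, hsq]
    positivity
  exact hfactor.trans hamgm

lemma continuousOn_integral_sq_sub {X α : Type*} [TopologicalSpace X] [MeasurableSpace α]
    {ν : Measure α} [IsProbabilityMeasure ν] {s : Set X} {F : α → ℝ} {H : X → α → ℝ}
    (hFm : AEStronglyMeasurable F ν) (hHm : ∀ θ ∈ s, AEStronglyMeasurable (H θ) ν)
    (hF01 : ∀ x, F x ∈ Set.Icc 0 1) (hH01 : ∀ θ x, H θ x ∈ Set.Icc 0 1)
    (hL2 : ∀ θ₀ ∈ s, ∀ ε > 0, ∀ᶠ θ in 𝓝[s] θ₀, ∫ x, (H θ x - H θ₀ x) ^ 2 ∂ν < ε) :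
    ContinuousOn (fun θ => ∫ x, (F x - H θ x) ^ 2 ∂ν) s := by
  intro θ₀ hθ₀
  refine Metric.tendsto_nhds.2 fun ε hε => ?_
  filter_upwards [hL2 θ₀ hθ₀ (ε / 2 * (ε / 2)) (by positivity), self_mem_nhdsWithin]
    with θ hθ hθs
  have hdiff := integrable_sq_sub_of_mem_Icc (hHm θ hθs) (hHm θ₀ hθ₀) (hH01 θ) (hH01 θ₀)
  rw [dist_eq_norm, ← integral_sub
    (integrable_sq_sub_of_mem_Icc hFm (hHm θ hθs) hF01 (hH01 θ))
    (integrable_sq_sub_of_mem_Icc hFm (hHm θ₀ hθ₀) hF01 (hH01 θ₀))]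
  calc ‖∫ x, ((F x - H θ x) ^ 2 - (F x - H θ₀ x) ^ 2) ∂ν‖
      ≤ ∫ x, (ε / 2 + (H θ x - H θ₀ x) ^ 2 / (ε / 2)) ∂ν := by
        refine norm_integral_le_of_norm_le ((integrable_const (ε / 2)).add (hdiff.div_const _))
          (ae_of_all _ fun x => ?_)
        exact abs_sq_sub_sub_sq_sub_le (hH01 θ x) (hH01 θ₀ x) (hF01 x) (half_pos hε)
    _ = ε / 2 + (∫ x, (H θ x - H θ₀ x) ^ 2 ∂ν) / (ε / 2) := by
        rw [integral_add (integrable_const _) (hdiff.div_const _), integral_const, integral_div]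
        simp
    _ < ε / 2 + ε / 2 := add_lt_add_right ((div_lt_iff₀ (half_pos hε)).2 hθ) _
    _ = ε := add_halves ε

lemma continuousOn_integral_sum_sq_sub {ι α : Type*} [Fintype ι] {X : ι → Type*}
    [∀ k, TopologicalSpace (X k)] [MeasurableSpace α] {ν : Measure α} [IsProbabilityMeasure ν]
    {s : ∀ k, Set (X k)} {F : α → ℝ} {H : ∀ k, X k → α → ℝ}
    (hFm : AEStronglyMeasurable F ν) (hHm : ∀ k, ∀ θ ∈ s k, AEStronglyMeasurable (H k θ) ν)
    (hF01 : ∀ x, F x ∈ Set.Icc 0 1) (hH01 : ∀ k θ x, H k θ x ∈ Set.Icc 0 1)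
    (hL2 : ∀ k, ∀ θ₀ ∈ s k, ∀ ε > 0, ∀ᶠ θ in 𝓝[s k] θ₀, ∫ x, (H k θ x - H k θ₀ x) ^ 2 ∂ν < ε) :
    ContinuousOn (fun θ : ∀ k, X k => ∫ x, ∑ k, (F x - H k (θ k) x) ^ 2 ∂ν)
      {θ | ∀ k, θ k ∈ s k} := by
  have hterm k : ContinuousOn (fun θ : ∀ k, X k => ∫ x, (F x - H k (θ k) x) ^ 2 ∂ν)
      {θ | ∀ k, θ k ∈ s k} :=
    (continuousOn_integral_sq_sub hFm (hHm k) hF01 (hH01 k) (hL2 k)).comp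
      (continuous_apply k).continuousOn fun θ hθ => hθ k
  refine (continuousOn_finsetSum Finset.univ fun k _ => hterm k).congr fun θ hθ => ?_
  exact integral_finsetSum _ fun k _ =>
    integrable_sq_sub_of_mem_Icc hFm (hHm k _ (hθ k)) hF01 (hH01 k _)

lemma IsCompact.exists_eq_zero_iff_sInf_image_eq_zero {β : Type*} [TopologicalSpace β]
    {s : Set β} (hs : IsCompact s) (hne : s.Nonempty) {f : β → ℝ} (hf : ContinuousOn f s)
    (hf0 : ∀ b ∈ s, 0 ≤ f b) :
    (∃ b ∈ s, f b = 0) ↔ sInf (f '' s) = 0 := by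
  constructor
  · rintro ⟨b, hb, hfb⟩
    exact IsLeast.csInf_eq ⟨⟨b, hb, hfb⟩, by rintro _ ⟨c, hc, rfl⟩; exact hf0 c hc⟩
  · intro hinf
    obtain ⟨b, hb, hmin⟩ := hs.exists_isMinOn hne hf
    have hleast : IsLeast (f '' s) (f b) := ⟨⟨b, hb, rfl⟩, by rintro _ ⟨c, hc, rfl⟩; exact hmin hc⟩
    exact ⟨b, hb, hleast.csInf_eq.symm.trans hinf⟩

lemma Continuous.integral_eq_zero_iff_of_nonneg_of_absolutelyContinuous {α : Type*}
    [TopologicalSpace α] [MeasurableSpace α] {μ ν : Measure α} [μ.IsOpenPosMeasure]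
    (hμν : μ ≪ ν) {p : α → ℝ} (hp : Continuous p) (hp0 : 0 ≤ p) (hpi : Integrable p ν) :
    ∫ x, p x ∂ν = 0 ↔ p = 0 := by
  rw [integral_eq_zero_iff_of_nonneg hp0 hpi]
  exact ⟨fun h => (hp.ae_eq_iff_eq μ continuous_const).1 (hμν.ae_le h),
    fun h => h ▸ EventuallyEq.rfl⟩

theorem stmt_2_general
    (K : ℕ)
    (dk : Fin K → ℕ)
    (Θ : ∀ k : Fin K, Set (EuclideanSpace ℝ (Fin (dk k))))
    (hΘne : ∀ k, (Θ k).Nonempty)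
    (g : ∀ k : Fin K, ℝ → EuclideanSpace ℝ (Fin (dk k)) → ℝ)
    (ν : Measure ℝ) [IsProbabilityMeasure ν]
    (F : ℝ → ℝ) (G : Fin K → ℝ → ℝ)
    -- F is a continuous CDF
    (hFcont : Continuous F) (hFmono : Monotone F)
    (hFbot : Tendsto F atBot (𝓝 0)) (hFtop : Tendsto F atTop (𝓝 1))
    -- each G k is a continuous CDF
    (hGcont : ∀ k, Continuous (G k)) (hGmono : ∀ k, Monotone (G k))
    (hGbot : ∀ k, Tendsto (G k) atBot (𝓝 0)) (hGtop : ∀ k, Tendsto (G k) atTop (𝓝 1))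
    -- (i) for every k and every θk ∈ Θ k, x ↦ g k x θk is continuous and increasing
    (hg_cont : ∀ k, ∀ θk ∈ Θ k, Continuous fun x => g k x θk)
    -- (ii) Lebesgue measure is absolutely continuous with respect to ν
    (hac : (volume : Measure ℝ) ≪ ν)
    -- (iii) each Θ k is compact
    (hΘcomp : ∀ k, IsCompact (Θ k))
    -- (iv) for every bounded continuous f and every k, θk ↦ f(g k (·, θk)) is
    -- continuous from Θ k into L²(ν)
    (hL2cont : ∀ k, ∀ f : ℝ → ℝ, Continuous f → (∃ M, ∀ x, |f x| ≤ M) →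
      ∀ θk₀ ∈ Θ k, ∀ ε > 0, ∃ δ > 0, ∀ θk ∈ Θ k, ‖θk - θk₀‖ < δ →
        ∫ x, (f (g k x θk) - f (g k x θk₀)) ^ 2 ∂ν < ε) :
    (∃ θ : ∀ k : Fin K, EuclideanSpace ℝ (Fin (dk k)),
        (∀ k, θ k ∈ Θ k) ∧ ∀ k, ∀ x : ℝ, F x = G k (g k x (θ k))) ↔
      sInf ((fun θ : ∀ k : Fin K, EuclideanSpace ℝ (Fin (dk k)) =>
          ∫ x, ∑ k, (F x - G k (g k x (θ k))) ^ 2 ∂ν) ''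
        {θ | ∀ k, θ k ∈ Θ k}) = 0 := by
  have hF01 := mem_Icc_of_tendsto_atBot_atTop hFmono hFbot hFtop
  have hG01 k := mem_Icc_of_tendsto_atBot_atTop (hGmono k) (hGbot k) (hGtop k)
  have hGg_cont k θk (hθk : θk ∈ Θ k) : Continuous fun x => G k (g k x θk) :=
    (hGcont k).comp (hg_cont k θk hθk)
  have hL2 k : ∀ θ₀ ∈ Θ k, ∀ ε > 0, ∀ᶠ θk in 𝓝[Θ k] θ₀,
      ∫ x, (G k (g k x θk) - G k (g k x θ₀)) ^ 2 ∂ν < ε := by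
    intro θ₀ hθ₀ ε hε
    obtain ⟨δ, hδ, hclose⟩ := hL2cont k (G k) (hGcont k)
      ⟨1, fun y => abs_le.2 ⟨by linarith [(hG01 k y).1], (hG01 k y).2⟩⟩ θ₀ hθ₀ ε hε
    exact eventually_nhdsWithin_iff.2 <| Metric.eventually_nhds_iff.2
      ⟨δ, hδ, fun θk hdist hθk => hclose θk hθk (by rwa [← dist_eq_norm])⟩
  have hJ_cont := continuousOn_integral_sum_sq_sub (H := fun k θk x => G k (g k x θk))
    hFcont.aestronglyMeasurable (fun k θk hθk => (hGg_cont k θk hθk).aestronglyMeasurable)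
    hF01 (fun k _ _ => hG01 k _) hL2
  have hS : IsCompact {θ : ∀ k : Fin K, EuclideanSpace ℝ (Fin (dk k)) | ∀ k, θ k ∈ Θ k} := by
    simpa [Set.pi] using isCompact_univ_pi hΘcomp
  have hSne : {θ : ∀ k : Fin K, EuclideanSpace ℝ (Fin (dk k)) | ∀ k, θ k ∈ Θ k}.Nonempty :=
    ⟨fun k => (hΘne k).some, fun k => (hΘne k).some_mem⟩
  rw [← hS.exists_eq_zero_iff_sInf_image_eq_zero hSne hJ_cont
    fun θ _ => integral_nonneg fun x => Finset.sum_nonneg fun k _ => sq_nonneg _]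
  refine exists_congr fun θ => and_congr_right fun hθ => ?_
  have hsum_cont : Continuous fun x => ∑ k, (F x - G k (g k x (θ k))) ^ 2 :=
    continuous_finsetSum _ fun k _ => (hFcont.sub (hGg_cont k _ (hθ k))).pow 2
  rw [hsum_cont.integral_eq_zero_iff_of_nonneg_of_absolutelyContinuous hac
    (fun x => Finset.sum_nonneg fun k _ => sq_nonneg _)
    (integrable_finsetSum _ fun k _ => integrable_sq_sub_of_mem_Icc hFcont.aestronglyMeasurable
      (hGg_cont k _ (hθ k)).aestronglyMeasurable hF01 fun _ => hG01 k _)]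
  simp only [funext_iff, Pi.zero_apply, Finset.sum_eq_zero_iff_of_nonneg (fun k _ => sq_nonneg _),
    Finset.mem_univ, true_implies, sq_eq_zero_iff, sub_eq_zero]
  exact forall_comm

/-- Proposition 2 of the paper: equivalent characterization of the
null hypothesis for transformations on multiple CDFs. -/
theorem stmt_2
    (K : ℕ) (hK : 1 ≤ K)
    (dk : Fin K → ℕ)
    (Θ : ∀ k : Fin K, Set (EuclideanSpace ℝ (Fin (dk k))))
    (hΘne : ∀ k, (Θ k).Nonempty)
    (g : ∀ k : Fin K, ℝ → EuclideanSpace ℝ (Fin (dk k)) → ℝ)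
    (ν : Measure ℝ) [IsProbabilityMeasure ν]
    (F : ℝ → ℝ) (G : Fin K → ℝ → ℝ)
    -- F is a continuous CDF
    (hFcont : Continuous F) (hFmono : Monotone F)
    (hFbot : Tendsto F atBot (𝓝 0)) (hFtop : Tendsto F atTop (𝓝 1))
    -- each G k is a continuous CDF
    (hGcont : ∀ k, Continuous (G k)) (hGmono : ∀ k, Monotone (G k))
    (hGbot : ∀ k, Tendsto (G k) atBot (𝓝 0)) (hGtop : ∀ k, Tendsto (G k) atTop (𝓝 1))
    -- (i) for every k and every θk ∈ Θ k, x ↦ g k x θk is continuous and increasing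
    (hg_cont : ∀ k, ∀ θk ∈ Θ k, Continuous fun x => g k x θk)
    (hg_mono : ∀ k, ∀ θk ∈ Θ k, StrictMono fun x => g k x θk)
    -- (ii) Lebesgue measure is absolutely continuous with respect to ν
    (hac : (volume : Measure ℝ) ≪ ν)
    -- (iii) each Θ k is compact
    (hΘcomp : ∀ k, IsCompact (Θ k))
    -- (iv) for every bounded continuous f and every k, θk ↦ f(g k (·, θk)) is
    -- continuous from Θ k into L²(ν)
    (hL2cont : ∀ k, ∀ f : ℝ → ℝ, Continuous f → (∃ M, ∀ x, |f x| ≤ M) →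
      ∀ θk₀ ∈ Θ k, ∀ ε > 0, ∃ δ > 0, ∀ θk ∈ Θ k, ‖θk - θk₀‖ < δ →
        ∫ x, (f (g k x θk) - f (g k x θk₀)) ^ 2 ∂ν < ε) :
    (∃ θ : ∀ k : Fin K, EuclideanSpace ℝ (Fin (dk k)),
        (∀ k, θ k ∈ Θ k) ∧ ∀ k, ∀ x : ℝ, F x = G k (g k x (θ k))) ↔
      sInf ((fun θ : ∀ k : Fin K, EuclideanSpace ℝ (Fin (dk k)) =>
          ∫ x, ∑ k, (F x - G k (g k x (θ k))) ^ 2 ∂ν) ''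
        {θ | ∀ k, θ k ∈ Θ k}) = 0 :=
  stmt_2_general K dk Θ hΘne g ν F G hFcont hFmono hFbot hFtop hGcont hGmono hGbot hGtop hg_cont hac
    hΘcomp hL2cont
end

section
/- For k = 1,…,K let Θ_k ⊆ ℝ^{d_k} be nonempty and compact, let ν be a Borel probability measure on ℝ, and let φ_k, h_k : ℝ × Θ_k → ℝ be bounded functions that are L²(ν)-continuous in θ_k. Write Θ = Θ₁ × ⋯ × Θ_K, define L(ψ₁,…,ψ_K) = inf_{(θ₁,…,θ_K)∈Θ} ∫_ℝ ∑_{k=1}^K ψ_k(x,θ_k)² dν(x), and let Θ₀(φ) = argmin_{θ∈Θ} ∫_ℝ ∑_{k=1}^K φ_k(x,θ_k)² dν(x), which is nonempty. Then for every sequence of positive reals t_n → 0 and every sequences of bounded functions h_{n,k} : ℝ × Θ_k → ℝ with max_k ‖h_{n,k} − h_k‖∞ → 0, lim_{n→∞} ( L(φ₁ + t_n h_{n,1}, …, φ_K + t_n h_{n,K}) − L(φ₁,…,φ_K) )/t_n = 2 · inf_{(θ₁,…,θ_K)∈Θ₀(φ)} ∫_ℝ ∑_{k=1}^K φ_k(x,θ_k)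 h_k(x,θ_k) dν(x). -/
open MeasureTheory Filter Topology Set

/-!
Write `M ψ θ = ∫ ∑ₖ ψₖ(x, θₖ)² dν`, so that `L ψ = inf_Θ M ψ`. Expanding the square,
`(M (φ + t hₙ) θ - M φ θ) / t = 2 ∫ ∑ₖ φₖ hₙ,ₖ + t ∫ ∑ₖ hₙ,ₖ²`, which tends to `2 ∫ ∑ₖ φₖ hₖ`
uniformly in `θ`. The claim is then a Danskin-type theorem: if `(Gᵢ - F) / tᵢ → D` uniformly on a
compact set on which `F` and `D` are continuous, then `(inf Gᵢ - inf F) / tᵢ` tends to the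
infimum of `D` over the argmin of `F`. The upper bound comes from evaluating `Gᵢ` on the argmin.
For the lower bound, points where `F` exceeds its minimum by `η` cost `η / tᵢ → ∞`, while by
compactness `D` is almost `≥ inf_{argmin} D` on the `η`-sublevel set for small `η`.
Both `M φ` and `θ ↦ ∫ ∑ₖ φₖ hₖ` are continuous by L²-continuity and `∫ |u| ≤ (∫ u²)^{1/2}`.
-/

theorem Real.sInf_image_const_mul {β : Type*} {c : ℝ} (hc : 0 ≤ c) (f : β → ℝ) (s : Set β) :
    sInf ((fun x => c * f x) '' s) = c * sInf (f '' s) := by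
  rw [← Set.image_image (c * ·) f s]
  exact Real.sInf_smul_of_nonneg hc (f '' s)

section Danskin

variable {X : Type*} [TopologicalSpace X] {S : Set X} {F D : X → ℝ}

theorem IsCompact.exists_pos_forall_lt_add_imp_lt (hS : IsCompact S) (hF : ContinuousOn F S)
    (hD : ContinuousOn D S) {L c : ℝ} (hc : ∀ θ ∈ S, F θ ≤ L → c < D θ) :
    ∃ η > 0, ∀ θ ∈ S, F θ < L + η → c < D θ := by
  obtain ⟨u, hu, hDu⟩ := continuousOn_iff_isClosed.1 hD (Iic c) isClosed_Iic
  have hmem : ∀ θ ∈ S, D θ ≤ c → θ ∈ S ∩ u := fun θ hθ hDθ =>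
    ⟨hθ, ((Set.ext_iff.1 hDu θ).1 ⟨hDθ, hθ⟩).1⟩
  have hLF : ∀ θ ∈ S ∩ u, L < F θ := fun θ hθ => by
    have hDθ : D θ ≤ c := ((Set.ext_iff.1 hDu θ).2 ⟨hθ.2, hθ.1⟩).1
    by_contra! hFθ
    exact (hc θ hθ.1 hFθ).not_ge hDθ
  obtain ⟨b, hLb, hb⟩ :=
    (hS.inter_right hu).exists_forall_le' (hF.mono inter_subset_left) hLF
  refine ⟨b - L, sub_pos.2 hLb, fun θ hθ hFθ => ?_⟩
  by_contra! hDθ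
  linarith [hb θ (hmem θ hθ hDθ)]

variable {ι : Type*} {l : Filter ι} {G : ι → X → ℝ} {t : ι → ℝ}

theorem IsCompact.eventually_add_mul_le_of_tendstoUniformlyOn (hS : IsCompact S)
    (hF : ContinuousOn F S) (hD : ContinuousOn D S) (htpos : ∀ i, 0 < t i)
    (ht0 : Tendsto t l (𝓝 0)) (hG : TendstoUniformlyOn (fun i θ => (G i θ - F θ) / t i) D l S)
    {L c a : ℝ} (hL : ∀ θ ∈ S, L ≤ F θ) (hc : ∀ θ ∈ S, F θ ≤ L → c ≤ D θ) (ha : a < c) :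
    ∀ᶠ i in l, ∀ θ ∈ S, L + t i * a ≤ G i θ := by
  obtain ⟨η, hη, hnear⟩ := hS.exists_pos_forall_lt_add_imp_lt hF hD (c := (a + c) / 2)
    fun θ hθ hFθ => by linarith [hc θ hθ hFθ]
  obtain ⟨m, hm⟩ := hS.bddBelow_image hD
  have hδ : 0 < (c - a) / 2 := by linarith
  filter_upwards [Metric.tendstoUniformlyOn_iff.1 hG _ hδ,
    (ht0.mul_const ((a + c) / 2 - m)).eventually
      (gt_mem_nhds (show 0 * ((a + c) / 2 - m) < η by rwa [zero_mul]))] with i hΔ ht θ hθ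
  have hΔθ := hΔ θ hθ
  rw [Real.dist_eq, abs_sub_lt_iff] at hΔθ
  have hGθ : G i θ = F θ + t i * ((G i θ - F θ) / t i) := by
    field_simp [(htpos i).ne']
    ring
  rw [hGθ]
  -- Near the minimum `D` exceeds `(a + c) / 2`; away from it `(F θ - L) / t i ≥ η / t i → ∞`.
  rcases lt_or_ge (F θ) (L + η) with hFθ | hFθ
  · have := hnear θ hθ hFθ
    nlinarith [htpos i, hL θ hθ]
  · have := hm (mem_image_of_mem D hθ)
    have := mul_le_mul_of_nonneg_left
      (show m - (c - a) / 2 ≤ (G i θ - F θ) / t i by linarith) (htpos i).le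
    nlinarith

theorem tendsto_sInf_image_sub_div (hS : IsCompact S) (hSne : S.Nonempty)
    (hF : ContinuousOn F S) (hD : ContinuousOn D S) (htpos : ∀ i, 0 < t i)
    (ht0 : Tendsto t l (𝓝 0)) (hG : TendstoUniformlyOn (fun i θ => (G i θ - F θ) / t i) D l S) :
    Tendsto (fun i => (sInf (G i '' S) - sInf (F '' S)) / t i) l
      (𝓝 (sInf (D '' {θ | θ ∈ S ∧ ∀ ϑ ∈ S, F θ ≤ F ϑ}))) := by
  obtain ⟨θs, hθsS, hθs⟩ := hS.exists_isMinOn hSne hF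
  have hmin : ∀ θ ∈ S, F θs ≤ F θ := isMinOn_iff.1 hθs
  rw [(show IsLeast (F '' S) (F θs) from ⟨mem_image_of_mem F hθsS,
    forall_mem_image.2 hmin⟩).csInf_eq]
  set Θ₀ := {θ | θ ∈ S ∧ ∀ ϑ ∈ S, F θ ≤ F ϑ}
  obtain ⟨m, hm⟩ := hS.bddBelow_image hD
  have hI : BddBelow (D '' Θ₀) := ⟨m, fun _ ⟨θ, hθ, hDθ⟩ => hm ⟨θ, hθ.1, hDθ⟩⟩
  have lower : ∀ a < sInf (D '' Θ₀), ∀ᶠ i in l, ∀ θ ∈ S, F θs + t i * a ≤ G i θ :=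
    fun a ha => hS.eventually_add_mul_le_of_tendstoUniformlyOn hF hD htpos ht0 hG hmin
      (fun θ hθ hFθ => csInf_le hI ⟨θ, ⟨hθ, fun ϑ hϑ => hFθ.trans (hmin ϑ hϑ)⟩, rfl⟩) ha
  refine tendsto_order.2 ⟨fun a ha => ?_, fun a ha => ?_⟩
  · filter_upwards [lower ((a + sInf (D '' Θ₀)) / 2) (by linarith)] with i hi
    have : F θs + t i * ((a + sInf (D '' Θ₀)) / 2) ≤ sInf (G i '' S) :=
      le_csInf (hSne.image _) (forall_mem_image.2 hi)
    rw [lt_div_iff₀ (htpos i)]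
    nlinarith [htpos i]
  · obtain ⟨_, ⟨θ, ⟨hθS, hθmin⟩, rfl⟩, hDθ⟩ :=
      exists_lt_of_csInf_lt (Set.Nonempty.image D (s := Θ₀) ⟨θs, hθsS, hmin⟩) ha
    have hFθ : F θ = F θs := le_antisymm (hθmin θs hθsS) (hmin θ hθS)
    filter_upwards [lower (sInf (D '' Θ₀) - 1) (by linarith),
      (hG.tendsto_at hθS).eventually (gt_mem_nhds hDθ)] with i hbdd hi
    calc (sInf (G i '' S) - F θs) / t i ≤ (G i θ - F θ) / t i := by
          rw [hFθ]
          gcongr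
          · exact (htpos i).le
          · exact csInf_le ⟨_, forall_mem_image.2 hbdd⟩ (mem_image_of_mem _ hθS)
      _ < a := hi

end Danskin

section L2Continuity

variable {α : Type*} [MeasurableSpace α] {μ : Measure α}

theorem sq_integral_abs_le_integral_sq [IsProbabilityMeasure μ] {f : α → ℝ} (hf : MemLp f 2 μ) :
    (∫ x, |f x| ∂μ) ^ 2 ≤ ∫ x, f x ^ 2 ∂μ := by
  have h := ProbabilityTheory.variance_nonneg |f| μ
  rw [ProbabilityTheory.variance_eq_sub hf.abs] at h
  simpa only [Pi.pow_apply, Pi.abs_apply, sq_abs, sub_nonneg] using h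

variable {E : Type*} [SeminormedAddCommGroup E]

def L2ContinuousOn (μ : Measure α) (f : α → E → ℝ) (s : Set E) : Prop :=
  ∀ θ₀ ∈ s, ∀ ε > 0, ∃ δ > 0, ∀ θ ∈ s, ‖θ - θ₀‖ < δ → ∫ x, (f x θ - f x θ₀) ^ 2 ∂μ < ε

variable [IsProbabilityMeasure μ] {s : Set E} {f g : α → E → ℝ} {M M' : ℝ}

theorem L2ContinuousOn.tendsto_integral_abs_sub (hf : L2ContinuousOn μ f s)
    (hfm : ∀ θ, AEStronglyMeasurable (fun x => f x θ) μ) (hfb : ∀ x θ, |f x θ| ≤ M)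
    {θ₀ : E} (hθ₀ : θ₀ ∈ s) :
    Tendsto (fun θ => ∫ x, |f x θ - f x θ₀| ∂μ) (𝓝[s] θ₀) (𝓝 0) := by
  have hsq : Tendsto (fun θ => ∫ x, (f x θ - f x θ₀) ^ 2 ∂μ) (𝓝[s] θ₀) (𝓝 0) := by
    refine Metric.tendsto_nhdsWithin_nhds.2 fun ε hε => ?_
    obtain ⟨δ, hδ, h⟩ := hf θ₀ hθ₀ ε hε
    refine ⟨δ, hδ, fun θ hθ hθδ => ?_⟩
    rw [Real.dist_0_eq_abs, abs_of_nonneg (integral_nonneg fun x => sq_nonneg _)]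
    exact h θ hθ (by rwa [← dist_eq_norm])
  have hmem : ∀ θ, MemLp (fun x => f x θ) 2 μ := fun θ =>
    .of_bound (hfm θ) M (ae_of_all _ (hfb · θ))
  refine squeeze_zero (fun θ => integral_nonneg fun x => abs_nonneg _) (fun θ => ?_)
    (by simpa using hsq.sqrt)
  exact Real.le_sqrt_of_sq_le (sq_integral_abs_le_integral_sq ((hmem θ).sub (hmem θ₀)))

theorem L2ContinuousOn.continuousOn_integral_mul (hf : L2ContinuousOn μ f s)
    (hg : L2ContinuousOn μ g s) (hfm : ∀ θ, AEStronglyMeasurable (fun x => f x θ) μ)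
    (hgm : ∀ θ, AEStronglyMeasurable (fun x => g x θ) μ) (hfb : ∀ x θ, |f x θ| ≤ M)
    (hgb : ∀ x θ, |g x θ| ≤ M') :
    ContinuousOn (fun θ => ∫ x, f x θ * g x θ ∂μ) s := by
  intro θ₀ hθ₀
  have hfL : ∀ θ, MemLp (fun x => f x θ) 2 μ := fun θ =>
    .of_bound (hfm θ) M (ae_of_all _ (hfb · θ))
  have hgL : ∀ θ, MemLp (fun x => g x θ) 2 μ := fun θ =>
    .of_bound (hgm θ) M' (ae_of_all _ (hgb · θ))
  have hprod : ∀ θ, Integrable (fun x => f x θ * g x θ) μ := fun θ =>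
    (hfL θ).integrable_mul (hgL θ)
  have habs : ∀ θ, Integrable (fun x => |f x θ - f x θ₀|) μ ∧
      Integrable (fun x => |g x θ - g x θ₀|) μ := fun θ =>
    ⟨(((hfL θ).sub (hfL θ₀)).integrable one_le_two).abs,
      (((hgL θ).sub (hgL θ₀)).integrable one_le_two).abs⟩
  have hlim := ((hf.tendsto_integral_abs_sub hfm hfb hθ₀).const_mul M').add
    ((hg.tendsto_integral_abs_sub hgm hgb hθ₀).const_mul M)
  rw [mul_zero, mul_zero, add_zero] at hlim
  rw [ContinuousWithinAt, tendsto_iff_dist_tendsto_zero]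
  refine squeeze_zero (fun _ => dist_nonneg) (fun θ => ?_) hlim
  have hpt : ∀ x, ‖f x θ * g x θ - f x θ₀ * g x θ₀‖
      ≤ M' * |f x θ - f x θ₀| + M * |g x θ - g x θ₀| := fun x => by
    rw [Real.norm_eq_abs, show f x θ * g x θ - f x θ₀ * g x θ₀
      = (f x θ - f x θ₀) * g x θ + f x θ₀ * (g x θ - g x θ₀) by ring]
    refine (abs_add_le _ _).trans ?_
    rw [abs_mul, abs_mul, mul_comm M']
    gcongr
    · exact hgb x θ
    · exact hfb x θ₀
  calc dist (∫ x, f x θ * g x θ ∂μ) (∫ x, f x θ₀ * g x θ₀ ∂μ)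
      = ‖∫ x, (f x θ * g x θ - f x θ₀ * g x θ₀) ∂μ‖ := by
        rw [dist_eq_norm, integral_sub (hprod θ) (hprod θ₀)]
    _ ≤ ∫ x, (M' * |f x θ - f x θ₀| + M * |g x θ - g x θ₀|) ∂μ :=
        norm_integral_le_of_norm_le (((habs θ).1.const_mul M').add ((habs θ).2.const_mul M))
          (ae_of_all _ hpt)
    _ = M' * ∫ x, |f x θ - f x θ₀| ∂μ + M * ∫ x, |g x θ - g x θ₀| ∂μ := by
        rw [integral_add ((habs θ).1.const_mul M') ((habs θ).2.const_mul M), integral_const_mul,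
          integral_const_mul]

end L2Continuity

section Criterion

variable {α : Type*} [MeasurableSpace α] {μ : Measure α} {ι : Type*} [Fintype ι]
  {E : ι → Type*}

theorem exists_forall_abs_le_of_finite {β : Type*} {f : ∀ k, β → E k → ℝ}
    (h : ∀ k, ∃ M, ∀ x θ, |f k x θ| ≤ M) : ∃ M, ∀ k x θ, |f k x θ| ≤ M := by
  choose M hM using h
  obtain ⟨C, hC⟩ := Finite.exists_le M
  exact ⟨C, fun k x θ => (hM k x θ).trans (hC k)⟩

theorem continuousOn_integral_sum_mul [∀ k, SeminormedAddCommGroup (E k)]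
    [IsProbabilityMeasure μ] {Θ : ∀ k, Set (E k)} {f g : ∀ k, α → E k → ℝ}
    (hf : ∀ k, L2ContinuousOn μ (f k) (Θ k)) (hg : ∀ k, L2ContinuousOn μ (g k) (Θ k))
    (hfm : ∀ k θ, AEStronglyMeasurable (fun x => f k x θ) μ)
    (hgm : ∀ k θ, AEStronglyMeasurable (fun x => g k x θ) μ)
    (hfb : ∀ k, ∃ M, ∀ x θ, |f k x θ| ≤ M) (hgb : ∀ k, ∃ M, ∀ x θ, |g k x θ| ≤ M) :
    ContinuousOn (fun θ : ∀ k, E k => ∫ x, ∑ k, f k x (θ k) * g k x (θ k) ∂μ)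
      {θ | ∀ k, θ k ∈ Θ k} := by
  choose Mf hMf using hfb
  choose Mg hMg using hgb
  have hk : ∀ k, ContinuousOn (fun θ : ∀ k, E k => ∫ x, f k x (θ k) * g k x (θ k) ∂μ)
      {θ | ∀ k, θ k ∈ Θ k} := fun k =>
    ((hf k).continuousOn_integral_mul (hg k) (hfm k) (hgm k) (hMf k) (hMg k)).comp
      (continuous_apply k).continuousOn fun θ hθ => hθ k
  refine (continuousOn_finsetSum Finset.univ fun k _ => hk k).congr fun θ _ => ?_
  refine integral_finsetSum _ fun k _ => ?_
  exact (MemLp.of_bound (p := 2) (hfm k (θ k)) (Mf k) (ae_of_all _ (hMf k · _))).integrable_mul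
    (MemLp.of_bound (p := 2) (hgm k (θ k)) (Mg k) (ae_of_all _ (hMg k · _)))

noncomputable def criterion (μ : Measure α) (ψ : ∀ k, α → E k → ℝ) (θ : ∀ k, E k) : ℝ :=
  ∫ x, ∑ k, ψ k x (θ k) ^ 2 ∂μ

theorem abs_sq_add_mul_sub_sq_sub_le {a b c t M δ : ℝ} (ha : |a| ≤ M) (hb : |b| ≤ M)
    (hcb : |c - b| ≤ δ) (ht : 0 ≤ t) (htδ : t ≤ δ) (hδ : δ ≤ 1) :
    |(a + t * c) ^ 2 - a ^ 2 - t * (2 * (a * b))| ≤ t * ((2 * M + (M + 1) ^ 2) * δ) := by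
  have hc : |c| ≤ M + 1 := by
    have := abs_sub_abs_le_abs_sub c b
    linarith
  have hc2 : c ^ 2 ≤ (M + 1) ^ 2 := by
    rw [← sq_abs]
    exact pow_le_pow_left₀ (abs_nonneg c) hc 2
  have hab : |2 * (a * (c - b))| ≤ 2 * M * δ := by
    rw [abs_mul, abs_mul, abs_two, mul_assoc]
    gcongr
    exact (abs_nonneg a).trans ha
  rw [show (a + t * c) ^ 2 - a ^ 2 - t * (2 * (a * b)) = t * (2 * (a * (c - b)) + t * c ^ 2) by
    ring, abs_mul, abs_of_nonneg ht]
  gcongr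
  refine (abs_add_le _ _).trans ?_
  rw [abs_of_nonneg (mul_nonneg ht (sq_nonneg c))]
  have := mul_le_mul htδ hc2 (sq_nonneg c) (ht.trans htδ)
  linarith

theorem abs_criterion_sub_div_sub_le [IsFiniteMeasure μ] {φ h g : ∀ k, α → E k → ℝ}
    {M δ t : ℝ} (hφm : ∀ k θ, AEStronglyMeasurable (fun x => φ k x θ) μ)
    (hhm : ∀ k θ, AEStronglyMeasurable (fun x => h k x θ) μ)
    (hgm : ∀ k θ, AEStronglyMeasurable (fun x => g k x θ) μ)
    (hφ : ∀ k x θ, |φ k x θ| ≤ M) (hh : ∀ k x θ, |h k x θ| ≤ M)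
    (hg : ∀ k x θ, |g k x θ - h k x θ| ≤ δ) (ht : 0 < t) (htδ : t ≤ δ) (hδ : δ ≤ 1)
    (θ : ∀ k, E k) :
    |(criterion μ (fun k x θ => φ k x θ + t * g k x θ) θ - criterion μ φ θ) / t
        - 2 * ∫ x, ∑ k, φ k x (θ k) * h k x (θ k) ∂μ|
      ≤ Fintype.card ι * (2 * M + (M + 1) ^ 2) * μ.real univ * δ := by
  have hgb : ∀ k x θ, |g k x θ| ≤ M + 1 := fun k x θ => by
    have := abs_sub_abs_le_abs_sub (g k x θ) (h k x θ)
    linarith [hh k x θ, hg k x θ]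
  have hmemLp : ∀ {u : ∀ k, α → E k → ℝ} {C : ℝ},
      (∀ k θ, AEStronglyMeasurable (fun x => u k x θ) μ) → (∀ k x θ, |u k x θ| ≤ C) →
      ∀ k, MemLp (fun x => u k x (θ k)) 2 μ :=
    fun hm hb k => .of_bound (hm k _) _ (ae_of_all _ (hb k · _))
  have hint₁ : Integrable (fun x => ∑ k, (φ k x (θ k) + t * g k x (θ k)) ^ 2) μ :=
    integrable_finsetSum _ fun k _ =>
      ((hmemLp hφm hφ k).add ((hmemLp hgm hgb k).const_mul t)).integrable_sq
  have hint₂ : Integrable (fun x => ∑ k, φ k x (θ k) ^ 2) μ :=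
    integrable_finsetSum _ fun k _ => (hmemLp hφm hφ k).integrable_sq
  have hint₃ : Integrable (fun x => ∑ k, φ k x (θ k) * h k x (θ k)) μ :=
    integrable_finsetSum _ fun k _ => (hmemLp hφm hφ k).integrable_mul (hmemLp hhm hh k)
  have hdiff : criterion μ (fun k x θ => φ k x θ + t * g k x θ) θ - criterion μ φ θ
      - t * (2 * ∫ x, ∑ k, φ k x (θ k) * h k x (θ k) ∂μ)
      = ∫ x, ∑ k, ((φ k x (θ k) + t * g k x (θ k)) ^ 2 - φ k x (θ k) ^ 2
          - t * (2 * (φ k x (θ k) * h k x (θ k)))) ∂μ := by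
    have hint₁₂ : Integrable (fun x => ∑ k, (φ k x (θ k) + t * g k x (θ k)) ^ 2
        - ∑ k, φ k x (θ k) ^ 2) μ := hint₁.sub hint₂
    rw [criterion, criterion, ← integral_sub hint₁ hint₂, ← integral_const_mul,
      ← integral_const_mul, ← integral_sub hint₁₂ ((hint₃.const_mul 2).const_mul t)]
    simp only [Finset.mul_sum, Finset.sum_sub_distrib]
  have hbound : ‖∫ x, ∑ k, ((φ k x (θ k) + t * g k x (θ k)) ^ 2 - φ k x (θ k) ^ 2
      - t * (2 * (φ k x (θ k) * h k x (θ k)))) ∂μ‖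
      ≤ Fintype.card ι * (t * ((2 * M + (M + 1) ^ 2) * δ)) * μ.real univ := by
    refine norm_integral_le_of_norm_le_const (ae_of_all _ fun x => ?_)
    refine (Finset.abs_sum_le_sum_abs _ _).trans ?_
    refine (Finset.sum_le_sum fun k _ => abs_sq_add_mul_sub_sq_sub_le (hφ k x (θ k))
      (hh k x (θ k)) (hg k x (θ k)) ht.le htδ hδ).trans_eq ?_
    simp
  rw [div_sub' ht.ne', abs_div, abs_of_pos ht, div_le_iff₀ ht, ← mul_comm t, hdiff]
  rw [Real.norm_eq_abs] at hbound
  linarith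

theorem tendstoUniformly_criterion_sub_div [IsFiniteMeasure μ] {β : Type*} {l : Filter β}
    {φ h : ∀ k, α → E k → ℝ} {g : β → ∀ k, α → E k → ℝ} {t : β → ℝ}
    (hφm : ∀ k θ, AEStronglyMeasurable (fun x => φ k x θ) μ)
    (hhm : ∀ k θ, AEStronglyMeasurable (fun x => h k x θ) μ)
    (hgm : ∀ i k θ, AEStronglyMeasurable (fun x => g i k x θ) μ)
    (hφb : ∀ k, ∃ M, ∀ x θ, |φ k x θ| ≤ M) (hhb : ∀ k, ∃ M, ∀ x θ, |h k x θ| ≤ M)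
    (htpos : ∀ i, 0 < t i) (ht0 : Tendsto t l (𝓝 0))
    (hg : ∀ δ > 0, ∀ᶠ i in l, ∀ k x θ, |g i k x θ - h k x θ| ≤ δ) :
    TendstoUniformly
      (fun i θ => (criterion μ (fun k x θ => φ k x θ + t i * g i k x θ) θ - criterion μ φ θ) / t i)
      (fun θ => 2 * ∫ x, ∑ k, φ k x (θ k) * h k x (θ k) ∂μ) l := by
  obtain ⟨Mφ, hMφ⟩ := exists_forall_abs_le_of_finite hφb
  obtain ⟨Mh, hMh⟩ := exists_forall_abs_le_of_finite hhb
  set M := max Mφ Mh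
  set C := Fintype.card ι * (2 * M + (M + 1) ^ 2) * μ.real univ
  refine Metric.tendstoUniformly_iff.2 fun ε hε => ?_
  obtain ⟨δ, hδ, hCδ⟩ := exists_pos_mul_lt hε |C|
  filter_upwards [hg (min δ 1) (by positivity), ht0.eventually (gt_mem_nhds (lt_min hδ one_pos))]
    with i hgi hti θ
  rw [dist_comm, Real.dist_eq]
  calc _ ≤ C * min δ 1 :=
        abs_criterion_sub_div_sub_le hφm hhm (hgm i) (fun k x θ => (hMφ k x θ).trans
          (le_max_left _ _)) (fun k x θ => (hMh k x θ).trans (le_max_right _ _)) hgi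
          (htpos i) hti.le (min_le_right _ _) θ
    _ ≤ |C| * δ := mul_le_mul (le_abs_self C) (min_le_left _ _) (by positivity) (abs_nonneg C)
    _ < ε := hCδ

end Criterion

theorem stmt_18_general
    (K : ℕ) (dk : Fin K → ℕ)
    (Θ : ∀ k : Fin K, Set (EuclideanSpace ℝ (Fin (dk k))))
    (hΘne : ∀ k, (Θ k).Nonempty) (hΘcomp : ∀ k, IsCompact (Θ k))
    (ν : Measure ℝ) [IsProbabilityMeasure ν]
    (φ h : ∀ k : Fin K, ℝ → EuclideanSpace ℝ (Fin (dk k)) → ℝ)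
    (hφmeas : ∀ k θk, Measurable fun x => φ k x θk)
    (hhmeas : ∀ k θk, Measurable fun x => h k x θk)
    -- each φ k and h k is bounded
    (hφb : ∀ k, ∃ M, ∀ x θk, |φ k x θk| ≤ M)
    (hhb : ∀ k, ∃ M, ∀ x θk, |h k x θk| ≤ M)
    -- each φ k and h k is L²(ν)-continuous in θ_k
    (hφc : ∀ k, ∀ θk₀ ∈ Θ k, ∀ ε > 0, ∃ δ > 0, ∀ θk ∈ Θ k, ‖θk - θk₀‖ < δ →
      ∫ x, (φ k x θk - φ k x θk₀) ^ 2 ∂ν < ε)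
    (hhc : ∀ k, ∀ θk₀ ∈ Θ k, ∀ ε > 0, ∃ δ > 0, ∀ θk ∈ Θ k, ‖θk - θk₀‖ < δ →
      ∫ x, (h k x θk - h k x θk₀) ^ 2 ∂ν < ε)
    -- the argmin set Θ₀(φ) over the product parameter set
    (Θ₀ : Set (∀ k : Fin K, EuclideanSpace ℝ (Fin (dk k))))
    (hΘ₀def : Θ₀ = {θ | (∀ k, θ k ∈ Θ k) ∧ ∀ ϑ : ∀ k : Fin K, EuclideanSpace ℝ (Fin (dk k)), (∀ k, ϑ k ∈ Θ k) →
      ∫ x, ∑ k, (φ k x (θ k)) ^ 2 ∂ν ≤ ∫ x, ∑ k, (φ k x (ϑ k)) ^ 2 ∂ν})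
    -- sequences t_n ↓ 0 and bounded h_{n,k} with max_k ‖h_{n,k} − h_k‖∞ → 0
    (t : ℕ → ℝ) (htpos : ∀ n, 0 < t n) (ht0 : Tendsto t atTop (𝓝 0))
    (hn : ℕ → ∀ k : Fin K, ℝ → EuclideanSpace ℝ (Fin (dk k)) → ℝ)
    (hnmeas : ∀ n k θk, Measurable fun x => hn n k x θk)
    (hnconv : ∀ ε > 0, ∃ N, ∀ n ≥ N, ∀ k x θk, |hn n k x θk - h k x θk| ≤ ε) :
    Θ₀.Nonempty ∧
    Tendsto
      (fun n =>
        (sInf ((fun θ : ∀ k : Fin K, EuclideanSpace ℝ (Fin (dk k)) =>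
            ∫ x, ∑ k, (φ k x (θ k) + t n * hn n k x (θ k)) ^ 2 ∂ν) ''
          {θ | ∀ k, θ k ∈ Θ k}) -
         sInf ((fun θ : ∀ k : Fin K, EuclideanSpace ℝ (Fin (dk k)) =>
            ∫ x, ∑ k, (φ k x (θ k)) ^ 2 ∂ν) '' {θ | ∀ k, θ k ∈ Θ k})) / t n)
      atTop
      (𝓝 (2 * sInf ((fun θ : ∀ k : Fin K, EuclideanSpace ℝ (Fin (dk k)) =>
        ∫ x, ∑ k, φ k x (θ k) * h k x (θ k) ∂ν) '' Θ₀))) := by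
  set S := {θ : ∀ k : Fin K, EuclideanSpace ℝ (Fin (dk k)) | ∀ k, θ k ∈ Θ k}
  have hS : IsCompact S := by simpa [Set.pi] using isCompact_univ_pi hΘcomp
  have hSne : S.Nonempty := ⟨fun k => (hΘne k).some, fun k => (hΘne k).some_mem⟩
  have hφm k θ := (hφmeas k θ).aestronglyMeasurable (μ := ν)
  have hhm k θ := (hhmeas k θ).aestronglyMeasurable (μ := ν)
  have hF : ContinuousOn (criterion ν φ) S := by
    have hcont := continuousOn_integral_sum_mul hφc hφc hφm hφm hφb hφb
    simp only [← sq] at hcont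
    exact hcont
  have hD : ContinuousOn (fun θ => 2 * ∫ x, ∑ k, φ k x (θ k) * h k x (θ k) ∂ν) S :=
    continuousOn_const.mul (continuousOn_integral_sum_mul hφc hhc hφm hhm hφb hhb)
  have hlim := tendsto_sInf_image_sub_div hS hSne hF hD htpos ht0
    (tendstoUniformly_criterion_sub_div hφm hhm
      (fun n k θ => (hnmeas n k θ).aestronglyMeasurable) hφb hhb htpos ht0
      fun δ hδ => eventually_atTop.2 (hnconv δ hδ)).tendstoUniformlyOn
  rw [Real.sInf_image_const_mul two_pos.le] at hlim
  obtain ⟨θs, hθs, hmin⟩ := hS.exists_isMinOn hSne hF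
  subst hΘ₀def
  exact ⟨⟨θs, hθs, fun ϑ hϑ => hmin hϑ⟩, hlim⟩

/-- Lemma 8 of the paper: first-order Hadamard directional
derivative of the multiple-samples criterion map
`L(ψ₁,…,ψ_K) = inf_{θ∈Θ₁×⋯×Θ_K} ∫ ∑_k ψ_k(x,θ_k)² dν(x)`. -/
theorem stmt_18
    (K : ℕ) (hK : 1 ≤ K) (dk : Fin K → ℕ)
    (Θ : ∀ k : Fin K, Set (EuclideanSpace ℝ (Fin (dk k))))
    (hΘne : ∀ k, (Θ k).Nonempty) (hΘcomp : ∀ k, IsCompact (Θ k))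
    (ν : Measure ℝ) [IsProbabilityMeasure ν]
    (φ h : ∀ k : Fin K, ℝ → EuclideanSpace ℝ (Fin (dk k)) → ℝ)
    (hφmeas : ∀ k θk, Measurable fun x => φ k x θk)
    (hhmeas : ∀ k θk, Measurable fun x => h k x θk)
    -- each φ k and h k is bounded
    (hφb : ∀ k, ∃ M, ∀ x θk, |φ k x θk| ≤ M)
    (hhb : ∀ k, ∃ M, ∀ x θk, |h k x θk| ≤ M)
    -- each φ k and h k is L²(ν)-continuous in θ_k
    (hφc : ∀ k, ∀ θk₀ ∈ Θ k, ∀ ε > 0, ∃ δ > 0, ∀ θk ∈ Θ k, ‖θk - θk₀‖ < δ →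
      ∫ x, (φ k x θk - φ k x θk₀) ^ 2 ∂ν < ε)
    (hhc : ∀ k, ∀ θk₀ ∈ Θ k, ∀ ε > 0, ∃ δ > 0, ∀ θk ∈ Θ k, ‖θk - θk₀‖ < δ →
      ∫ x, (h k x θk - h k x θk₀) ^ 2 ∂ν < ε)
    -- the argmin set Θ₀(φ) over the product parameter set
    (Θ₀ : Set (∀ k : Fin K, EuclideanSpace ℝ (Fin (dk k))))
    (hΘ₀def : Θ₀ = {θ | (∀ k, θ k ∈ Θ k) ∧ ∀ ϑ : ∀ k : Fin K, EuclideanSpace ℝ (Fin (dk k)), (∀ k, ϑ k ∈ Θ k) →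
      ∫ x, ∑ k, (φ k x (θ k)) ^ 2 ∂ν ≤ ∫ x, ∑ k, (φ k x (ϑ k)) ^ 2 ∂ν})
    -- sequences t_n ↓ 0 and bounded h_{n,k} with max_k ‖h_{n,k} − h_k‖∞ → 0
    (t : ℕ → ℝ) (htpos : ∀ n, 0 < t n) (ht0 : Tendsto t atTop (𝓝 0))
    (hn : ℕ → ∀ k : Fin K, ℝ → EuclideanSpace ℝ (Fin (dk k)) → ℝ)
    (hnmeas : ∀ n k θk, Measurable fun x => hn n k x θk)
    (hnb : ∀ n, ∃ M, ∀ k x θk, |hn n k x θk| ≤ M)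
    (hnconv : ∀ ε > 0, ∃ N, ∀ n ≥ N, ∀ k x θk, |hn n k x θk - h k x θk| ≤ ε) :
    Θ₀.Nonempty ∧
    Tendsto
      (fun n =>
        (sInf ((fun θ : ∀ k : Fin K, EuclideanSpace ℝ (Fin (dk k)) =>
            ∫ x, ∑ k, (φ k x (θ k) + t n * hn n k x (θ k)) ^ 2 ∂ν) ''
          {θ | ∀ k, θ k ∈ Θ k}) -
         sInf ((fun θ : ∀ k : Fin K, EuclideanSpace ℝ (Fin (dk k)) =>
            ∫ x, ∑ k, (φ k x (θ k)) ^ 2 ∂ν) '' {θ | ∀ k, θ k ∈ Θ k})) / t n)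
      atTop
      (𝓝 (2 * sInf ((fun θ : ∀ k : Fin K, EuclideanSpace ℝ (Fin (dk k)) =>
        ∫ x, ∑ k, φ k x (θ k) * h k x (θ k) ∂ν) '' Θ₀))) :=
  stmt_18_general K dk Θ hΘne hΘcomp ν φ h hφmeas hhmeas hφb hhb hφc hhc Θ₀ hΘ₀def t htpos ht0 hn
    hnmeas hnconv
end
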